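/- Let Z ∈ ℝ^{K×N} be partitioned into column blocks Z = [Z₁,…,Z_K] with Z_k ∈ ℝ^{K×n_k}, and let z̄_k be the mean of the columns of Z_k. Then ‖Z‖_* ≥ ‖[z̄₁1ᵀ_{n₁},…,z̄_K1ᵀ_{n_K}]‖_*, i.e., replacing each column block by its repeated column mean does not increase the nuclear norm. -/

import Mathlib

open Matrix

/-- The nuclear norm of a real matrix: the sum of its singular values,
i.e. the square roots of the eigenvalues of `Aᴴ * A`. -/
noncomputable def nuclearNorm {m n : Type*} [Fintype m] [Fintype n] [DecidableEq n]
    (A : Matrix m n ℝ) : ℝ :=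
  ∑ i, Real.sqrt ((Matrix.isHermitian_conjTranspose_mul_self A).eigenvalues i)

section Helpers

open Polynomial
open scoped RealInnerProductSpace

variable {N : Type*} [Fintype N] [DecidableEq N]

/-- Square root of a real positive semidefinite matrix (removed from Mathlib). -/
noncomputable def Matrix.PosSemidef.sqrt {A : Matrix N N ℝ} (hA : A.PosSemidef) : Matrix N N ℝ :=
  hA.1.eigenvectorUnitary.1 * diagonal ((RCLike.ofReal : ℝ → ℝ) ∘ Real.sqrt ∘ hA.1.eigenvalues) *
    (star hA.1.eigenvectorUnitary : Matrix N N ℝ)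

lemma Matrix.PosSemidef.posSemidef_sqrt {A : Matrix N N ℝ} (hA : A.PosSemidef) :
    hA.sqrt.PosSemidef := by
  have h := ((posSemidef_diagonal_iff (d := (RCLike.ofReal : ℝ → ℝ) ∘ Real.sqrt ∘ hA.1.eigenvalues)).mpr
    fun i => by simp [Real.sqrt_nonneg]).mul_mul_conjTranspose_same
    (hA.1.eigenvectorUnitary.1)
  exact h

lemma Matrix.PosSemidef.sqrt_mul_self {A : Matrix N N ℝ} (hA : A.PosSemidef) :
    hA.sqrt * hA.sqrt = A := by
  have hU : (star hA.1.eigenvectorUnitary : Matrix N N ℝ) * hA.1.eigenvectorUnitary.1 = 1 :=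
    Unitary.coe_star_mul_self _
  have hD : diagonal ((RCLike.ofReal : ℝ → ℝ) ∘ Real.sqrt ∘ hA.1.eigenvalues) *
      diagonal ((RCLike.ofReal : ℝ → ℝ) ∘ Real.sqrt ∘ hA.1.eigenvalues) =
      diagonal (RCLike.ofReal ∘ hA.1.eigenvalues) := by
    rw [diagonal_mul_diagonal]
    congr 1
    ext i
    simp [Real.mul_self_sqrt (hA.eigenvalues_nonneg i)]
  unfold Matrix.PosSemidef.sqrt
  conv_rhs => rw [hA.1.spectral_theorem, Unitary.conjStarAlgAut_apply]
  rw [show ∀ U D V : Matrix N N ℝ, U * D * V * (U * D * V) = U * (D * (V * U) * D) * V by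
    intro U D V; simp only [Matrix.mul_assoc]]
  rw [hU, Matrix.mul_one, hD, Matrix.mul_assoc]

private lemma myTraceNonneg {A : Matrix N N ℝ} (hA : A.PosSemidef) : 0 ≤ A.trace := by
  rw [Matrix.trace]
  refine Finset.sum_nonneg fun i _ => ?_
  have h := hA.dotProduct_mulVec_nonneg (Pi.single i 1)
  simpa [dotProduct, Pi.single_apply, Matrix.mulVec_single] using h

private lemma myTraceSqrt {A : Matrix N N ℝ} (hA : A.PosSemidef) :
    hA.sqrt.trace = ∑ i, Real.sqrt (hA.1.eigenvalues i) := by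
  rw [Matrix.PosSemidef.sqrt, Matrix.trace_mul_cycle]
  rw [show (star hA.1.eigenvectorUnitary : Matrix N N ℝ) * hA.1.eigenvectorUnitary.1 = 1 from
    Unitary.coe_star_mul_self _]
  rw [one_mul, Matrix.trace_diagonal]
  simp

private lemma myPsdSubOfSq {X Y : Matrix N N ℝ} (hX : X.PosSemidef) (hY : Y.PosSemidef)
    (h : (Y * Y - X * X).PosSemidef) : (Y - X).PosSemidef := by
  have hE : (Y - X).IsHermitian := hY.1.sub hX.1
  refine hE.posSemidef_iff_eigenvalues_nonneg.mpr fun i => show (0:ℝ) ≤ hE.eigenvalues i from ?_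
  by_contra hneg
  push_neg at hneg
  set μ : ℝ := hE.eigenvalues i with hμ
  set v : N → ℝ := ⇑(hE.eigenvectorBasis i) with hvdef
  have hv : (Y - X) *ᵥ v = μ • v := hE.mulVec_eigenvectorBasis i
  have hvv : v ⬝ᵥ v = 1 := by
    have h1 : ‖hE.eigenvectorBasis i‖ = 1 := hE.eigenvectorBasis.orthonormal.1 i
    have h2 : ⟪hE.eigenvectorBasis i, hE.eigenvectorBasis i⟫ = (1 : ℝ) := by
      rw [real_inner_self_eq_norm_sq, h1]; norm_num
    rw [EuclideanSpace.inner_eq_star_dotProduct] at h2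
    simpa [dotProduct, hvdef, mul_comm] using h2
  have hXv : 0 ≤ v ⬝ᵥ (X *ᵥ v) := by simpa using hX.dotProduct_mulVec_nonneg v
  have hYv : 0 ≤ v ⬝ᵥ (Y *ᵥ v) := by simpa using hY.dotProduct_mulVec_nonneg v
  have hdiff : v ⬝ᵥ (X *ᵥ v) - v ⬝ᵥ (Y *ᵥ v) = -μ := by
    have h3 : v ⬝ᵥ ((Y - X) *ᵥ v) = μ := by rw [hv]; simp [dotProduct_smul, hvv]
    rw [sub_mulVec, dotProduct_sub] at h3
    linarith
  have hD : (X - Y) *ᵥ v = (-μ) • v := by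
    rw [show X - Y = -(Y - X) from (neg_sub Y X).symm, neg_mulVec, hv]
    ext j; simp
  have hkey : v ⬝ᵥ ((Y * Y - X * X) *ᵥ v) = μ * (v ⬝ᵥ (X *ᵥ v) + v ⬝ᵥ (Y *ᵥ v)) := by
    have hXX : Y * Y - X * X = -(X * (X - Y)) - (X - Y) * Y := by noncomm_ring
    have e1 : v ⬝ᵥ ((X * (X - Y)) *ᵥ v) = -μ * (v ⬝ᵥ (X *ᵥ v)) := by
      rw [← Matrix.mulVec_mulVec, hD, Matrix.mulVec_smul, dotProduct_smul]
      simp [smul_eq_mul]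
    have e2 : v ⬝ᵥ (((X - Y) * Y) *ᵥ v) = -μ * (v ⬝ᵥ (Y *ᵥ v)) := by
      rw [← Matrix.mulVec_mulVec, Matrix.dotProduct_mulVec]
      have hsym : (X - Y)ᵀ = X - Y := by
        have h4 : (Y - X)ᴴ = Y - X := hE
        rw [conjTranspose_eq_transpose_of_trivial] at h4
        calc (X - Y)ᵀ = (-(Y - X))ᵀ := by rw [neg_sub]
          _ = -(Y - X)ᵀ := transpose_neg _
          _ = X - Y := by rw [h4, neg_sub]
      have h5 : v ᵥ* (X - Y) = (-μ) • v := by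
        rw [← hsym, vecMul_transpose, hD]
      rw [h5, smul_dotProduct]
      simp [smul_eq_mul]
    rw [hXX, sub_mulVec, dotProduct_sub, neg_mulVec, dotProduct_neg, e1, e2]
    ring
  have hpos : 0 < v ⬝ᵥ (X *ᵥ v) + v ⬝ᵥ (Y *ᵥ v) := by nlinarith
  have h0 : 0 ≤ v ⬝ᵥ ((Y * Y - X * X) *ᵥ v) := by simpa using h.dotProduct_mulVec_nonneg v
  nlinarith

private lemma myDetComm (C D : Matrix N N ℝ) (x : ℝ) :
    det (x • (1 : Matrix N N ℝ) - C * D) = det (x • (1 : Matrix N N ℝ) - D * C) := by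
  rcases eq_or_ne x 0 with rfl | hx
  · rw [zero_smul, zero_sub, zero_sub, det_neg, det_neg, det_mul, det_mul, mul_comm (C.det)]
  · have key : ∀ (A B : Matrix N N ℝ),
        x • (1 : Matrix N N ℝ) - A * B = x • ((1 : Matrix N N ℝ) - (x⁻¹ • A) * B) := by
      intro A B
      rw [smul_sub, Matrix.smul_mul, smul_smul, mul_inv_cancel₀ hx, one_smul]
    rw [key C D, key D C, det_smul, det_smul]
    congr 1
    have h1 : (1 : Matrix N N ℝ) - (x⁻¹ • D) * C = 1 - D * (x⁻¹ • C) := by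
      rw [Matrix.smul_mul, Matrix.mul_smul]
    rw [h1, det_one_sub_mul_comm]

private lemma myDetEigen {A : Matrix N N ℝ} (hA : A.IsHermitian) (x : ℝ) :
    det (x • (1 : Matrix N N ℝ) - A) = ∏ i, (x - hA.eigenvalues i) := by
  conv_lhs => rw [hA.spectral_theorem, Unitary.conjStarAlgAut_apply]
  have hU : (hA.eigenvectorUnitary : Matrix N N ℝ) * (star hA.eigenvectorUnitary : Matrix N N ℝ)
      = 1 := Unitary.coe_mul_star_self _
  have h1 : x • (1 : Matrix N N ℝ) = (hA.eigenvectorUnitary : Matrix N N ℝ) *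
      (x • (1 : Matrix N N ℝ)) * (star hA.eigenvectorUnitary : Matrix N N ℝ) := by
    rw [Matrix.mul_smul, Matrix.mul_one, Matrix.smul_mul, hU]
  rw [h1]
  have h3 : (hA.eigenvectorUnitary : Matrix N N ℝ) * (x • (1 : Matrix N N ℝ)) *
        (star hA.eigenvectorUnitary : Matrix N N ℝ) -
      (hA.eigenvectorUnitary : Matrix N N ℝ) * diagonal (RCLike.ofReal ∘ hA.eigenvalues) *
        (star hA.eigenvectorUnitary : Matrix N N ℝ) =
      (hA.eigenvectorUnitary : Matrix N N ℝ) *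
        (x • (1 : Matrix N N ℝ) - diagonal (RCLike.ofReal ∘ hA.eigenvalues)) *
        (star hA.eigenvectorUnitary : Matrix N N ℝ) := by
    rw [Matrix.mul_sub, Matrix.sub_mul]
  rw [h3, det_mul, det_mul, mul_comm (det _), mul_assoc, ← det_mul, ← det_mul, hU]
  have h2 : x • (1 : Matrix N N ℝ) - diagonal (RCLike.ofReal ∘ hA.eigenvalues) =
      diagonal (fun i => x - hA.eigenvalues i) := by
    rw [smul_eq_diagonal_mul]
    ext i j
    by_cases hij : i = j <;> simp [diagonal, hij]
  rw [h2, Matrix.mul_one, det_diagonal]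

private lemma myMultisetEq {A B : Matrix N N ℝ} (hA : A.IsHermitian) (hB : B.IsHermitian)
    (h : ∀ x : ℝ, det (x • (1 : Matrix N N ℝ) - A) = det (x • (1 : Matrix N N ℝ) - B)) :
    Finset.univ.val.map hA.eigenvalues = Finset.univ.val.map hB.eigenvalues := by
  have hpq : (∏ i, (X - Polynomial.C (hA.eigenvalues i))) =
      (∏ i, (X - Polynomial.C (hB.eigenvalues i))) := by
    apply Polynomial.funext
    intro r
    simpa [Polynomial.eval_prod, ← myDetEigen hA, ← myDetEigen hB] using h r
  have key : ∀ (f : N → ℝ), (∏ i, (X - Polynomial.C (f i))).roots =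
      Finset.univ.val.map f := by
    intro f
    rw [show (∏ i, (X - Polynomial.C (f i))) =
        ((Finset.univ.val.map f).map (fun a => X - Polynomial.C a)).prod by
      rw [Multiset.map_map]; rfl]
    exact Polynomial.roots_multiset_prod_X_sub_C _
  rw [← key hA.eigenvalues, ← key hB.eigenvalues, hpq]

private lemma mySumSqrtEq {A B : Matrix N N ℝ} (hA : A.IsHermitian) (hB : B.IsHermitian)
    (h : ∀ x : ℝ, det (x • (1 : Matrix N N ℝ) - A) = det (x • (1 : Matrix N N ℝ) - B)) :
    ∑ i, Real.sqrt (hA.eigenvalues i) = ∑ i, Real.sqrt (hB.eigenvalues i) := by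
  have h1 := myMultisetEq hA hB h
  have key : ∀ (f : N → ℝ), ∑ i, Real.sqrt (f i) =
      ((Finset.univ.val.map f).map Real.sqrt).sum := by
    intro f
    rw [Multiset.map_map]; rfl
  rw [key, key, h1]

private lemma myCongr {A B : Matrix N N ℝ} (hA : A.IsHermitian) (hB : B.IsHermitian)
    (hAB : A = B) :
    ∑ i, Real.sqrt (hA.eigenvalues i) = ∑ i, Real.sqrt (hB.eigenvalues i) := by
  subst hAB; rfl

end Helpers

theorem nuclearNorm_blockwise_column_mean_le
    {K : ℕ} (n : Fin K → ℕ) (hn : ∀ k, 0 < n k)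
    (Z : Matrix (Fin K) ((k : Fin K) × Fin (n k)) ℝ)
    (zbar : Fin K → Fin K → ℝ)
    (hzbar : ∀ k j, zbar k j = (n k : ℝ)⁻¹ * ∑ i : Fin (n k), Z j ⟨k, i⟩) :
    nuclearNorm (Matrix.of fun (j : Fin K) (c : (k : Fin K) × Fin (n k)) => zbar c.1 j)
      ≤ nuclearNorm Z := by
  classical
  have hn' : ∀ k, ((n k : ℝ)) ≠ 0 := fun k => Nat.cast_ne_zero.mpr (hn k).ne'
  set P : Matrix ((k : Fin K) × Fin (n k)) ((k : Fin K) × Fin (n k)) ℝ :=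
    Matrix.of (fun a b => if a.1 = b.1 then ((n a.1 : ℝ))⁻¹ else 0) with hPdef
  have hsum : ∀ (f : ((k : Fin K) × Fin (n k)) → ℝ),
      ∑ c : (k : Fin K) × Fin (n k), f c = ∑ k : Fin K, ∑ i : Fin (n k), f ⟨k, i⟩ := by
    intro f
    rw [← Finset.univ_sigma_univ, Finset.sum_sigma]
  have hPsym : Pᴴ = P := by
    ext a b
    simp only [conjTranspose_apply, of_apply, star_trivial, P]
    by_cases hab : a.1 = b.1
    · rw [if_pos hab, if_pos hab.symm, hab]
    · rw [if_neg hab, if_neg (fun h => hab h.symm)]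
  have hPP : P * P = P := by
    ext a b
    rw [mul_apply, hsum]
    by_cases hab : a.1 = b.1
    · rw [Finset.sum_eq_single a.1 ?_ (by simp)]
      · simp only [P, of_apply, if_pos rfl, if_pos hab, ↓reduceIte]
        rw [Finset.sum_const, Finset.card_univ, Fintype.card_fin, nsmul_eq_mul]
        field_simp
      · intro k _ hk
        apply Finset.sum_eq_zero
        intro i _
        have hne : ¬ a.1 = k := fun h => hk h.symm
        simp only [P, of_apply, if_neg hne, zero_mul]
    · rw [show P a b = (0:ℝ) by simp [P, hab]]
      apply Finset.sum_eq_zero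
      intro k _
      apply Finset.sum_eq_zero
      intro i _
      by_cases h1 : a.1 = k
      · have h2 : ¬ k = b.1 := fun h => hab (h1.trans h)
        simp [P, h2]
      · simp [P, h1]
  have hM : (Matrix.of fun (j : Fin K) (c : (k : Fin K) × Fin (n k)) => zbar c.1 j) = Z * P := by
    ext j c
    rw [of_apply, mul_apply, hsum, Finset.sum_eq_single c.1 ?_ (by simp)]
    · simp only [P, of_apply, if_pos rfl]
      rw [hzbar, ← Finset.sum_mul, mul_comm]
      simp
    · intro k _ hk
      apply Finset.sum_eq_zero
      intro i _
      simp [P, hk]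
  rw [hM]
  set B := Zᴴ * Z with hBdef
  have hB : B.PosSemidef := posSemidef_conjTranspose_mul_self Z
  set S := hB.sqrt with hSdef
  have hS : S.PosSemidef := hB.posSemidef_sqrt
  have hSS : S * S = B := hB.sqrt_mul_self
  have hSH : Sᴴ = S := hS.1
  have hMM : (Z * P)ᴴ * (Z * P) = P * B * P := by
    rw [conjTranspose_mul, hPsym, Matrix.mul_assoc P Zᴴ (Z * P),
      ← Matrix.mul_assoc Zᴴ Z P, ← Matrix.mul_assoc]
  have hPBP : (P * B * P).PosSemidef := by
    have h0 := hB.conjTranspose_mul_mul_same P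
    rwa [hPsym] at h0
  set G := S * P * S with hGdef
  have hGeq : G = (S * P) * (P * S) := by
    rw [hGdef, ← Matrix.mul_assoc (S * P) P S, Matrix.mul_assoc S P P, hPP]
  have hG : G.PosSemidef := by
    have h0 : (P * S)ᴴ = S * P := by rw [conjTranspose_mul, hSH, hPsym]
    have h1 := posSemidef_conjTranspose_mul_self (P * S)
    rwa [h0, ← hGeq] at h1
  have hPBPeq : P * B * P = (P * S) * (S * P) := by
    rw [← hSS, ← Matrix.mul_assoc (P * S) S P, Matrix.mul_assoc P S S]
  have hdet : ∀ x : ℝ, det (x • (1 : Matrix _ _ ℝ) - (P * B * P)) =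
      det (x • (1 : Matrix _ _ ℝ) - G) := fun x => by
    rw [hPBPeq, hGeq]; exact myDetComm (P * S) (S * P) x
  set T := hG.sqrt with hTdef
  have hTT : T * T = G := hG.sqrt_mul_self
  have hBG : (B - G).PosSemidef := by
    have h1 : ((1 - P) * S)ᴴ = S * (1 - P) := by
      rw [conjTranspose_mul, hSH, conjTranspose_sub, conjTranspose_one, hPsym]
    have h3 : (1 - P) * (1 - P) = 1 - P := by
      rw [Matrix.sub_mul, Matrix.one_mul, Matrix.mul_sub, Matrix.mul_one, hPP]
      abel
    have h2 : (S * (1 - P)) * ((1 - P) * S) = B - G := by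
      calc (S * (1 - P)) * ((1 - P) * S) = S * ((1 - P) * (1 - P)) * S := by
            rw [← Matrix.mul_assoc (S * (1 - P)) (1 - P) S, Matrix.mul_assoc S (1 - P) (1 - P)]
        _ = S * (1 - P) * S := by rw [h3]
        _ = B - G := by rw [Matrix.mul_sub, Matrix.mul_one, Matrix.sub_mul, hSS, hGdef]
    have h4 := posSemidef_conjTranspose_mul_self ((1 - P) * S)
    rwa [h1, h2] at h4
  have hmono : (S - T).PosSemidef := myPsdSubOfSq hG.posSemidef_sqrt hB.posSemidef_sqrt
    (by rw [hSS, hTT]; exact hBG)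
  have htr : T.trace ≤ S.trace := by
    have h5 := myTraceNonneg hmono
    rw [Matrix.trace_sub] at h5
    linarith
  calc nuclearNorm (Z * P) = ∑ i, Real.sqrt (hPBP.1.eigenvalues i) :=
        myCongr _ hPBP.1 hMM
    _ = ∑ i, Real.sqrt (hG.1.eigenvalues i) := mySumSqrtEq hPBP.1 hG.1 hdet
    _ = T.trace := (myTraceSqrt hG).symm
    _ ≤ S.trace := htr
    _ = ∑ i, Real.sqrt (hB.1.eigenvalues i) := myTraceSqrt hB
    _ = nuclearNorm Z := myCongr hB.1 _ rfl
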